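/- Let 𝒜, 𝓑, C₁, C₂, C₃, D₁, D₂, 𝐦 ∈ ℝ and r₀ > 0. Define f₀(r) = √(1 + r²) + 𝒜 log r + 𝓑 + D₁/r + D₂/r² for r ≥ r₀. Suppose u : [r₀, ∞) → (0, ∞) is differentiable with u(r) = 1 + C₁/r + C₂/r² + C₃/r³ + O(r^{−4}) and u′(r) = −C₁/r² − 2C₂/r³ − 3C₃/r⁴ + O(r^{−5}) as r → ∞, and suppose G : [r₀, ∞) → ℝ satisfies G(r) = (1 + r²) − 𝐦/r + O(r^{−2}) as r → ∞. Then 2 G(r) u′(r) f₀′(r) / u(r) = −2C₁ + (2C₁² − 4C₂ − 2𝒜C₁)/r + (2C₁D₁ − C₁ + 6C₁C₂ − 6C₃ − 4𝒜C₂ + 2𝒜C₁² − 2C₁³)/r² + O(r^{−3}) as r → ∞. -/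

import Mathlib

/-!
Split each factor into its truncated expansion and a remainder:
`G = g + O(r⁻²)` with `g = O(r²)`, `u' = v + O(r⁻⁵)` with `v = O(r⁻²)`, `u = w + O(r⁻⁴)`, and
`f₀' = q + O(r⁻⁴)`, the last from `r / √(1 + r²) = 1 - 1 / (2r²) + O(r⁻⁴)`. Every product
involving a remainder is `O(r⁻³)`, so `2 G u' f₀' - u T = 2 g v q - w T + O(r⁻³)`, where `T` is the
claimed three-term expansion. In the variable `x = 1/r`, the function `2 g v q - w T` is a
polynomial whose coefficients of `1, x, x²` vanish, hence it is `O(r⁻³)`. Dividing by `u → 1`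
gives the claim.
-/

open Filter Asymptotics Polynomial Topology

section RpowGauge

theorem isBigO_rpow_atTop_iff {f : ℝ → ℝ} {k : ℝ} :
    f =O[atTop] (fun r => r ^ k) ↔ ∃ C R, ∀ r ≥ R, |f r| ≤ C * r ^ k := by
  have hnorm : ∀ᶠ r : ℝ in atTop, ‖r ^ k‖ = r ^ k := by
    filter_upwards [eventually_gt_atTop 0] with r hr
    exact Real.norm_of_nonneg (Real.rpow_nonneg hr.le k)
  rw [isBigO_iff]
  refine exists_congr fun C => ?_
  rw [← eventually_atTop]
  exact eventually_congr (hnorm.mono fun r hr => by rw [hr, Real.norm_eq_abs])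

theorem isBigO_rpow_rpow_atTop_of_le {a b : ℝ} (h : a ≤ b) :
    (fun r : ℝ => r ^ a) =O[atTop] fun r => r ^ b :=
  isBigO_rpow_atTop_iff.2 ⟨1, 1, fun r hr => by
    rw [one_mul, abs_of_nonneg (Real.rpow_nonneg (by linarith) a)]
    exact Real.rpow_le_rpow_of_exponent_le hr h⟩

theorem Asymptotics.IsBigO.mul_rpow_atTop {f g : ℝ → ℝ} {a b : ℝ}
    (hf : f =O[atTop] fun r => r ^ a) (hg : g =O[atTop] fun r => r ^ b) :
    (f * g) =O[atTop] fun r => r ^ (a + b) :=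
  (hf.mul hg).congr' EventuallyEq.rfl <| by
    filter_upwards [eventually_gt_atTop 0] with r hr using (Real.rpow_add hr a b).symm

theorem isBigO_mul_sub_mul_rpow_atTop {f₁ f₂ g₁ g₂ : ℝ → ℝ} {a₁ a₂ b₁ b₂ k : ℝ}
    (h₁ : (f₁ - g₁) =O[atTop] fun r => r ^ a₁) (hg₁ : g₁ =O[atTop] fun r => r ^ b₁)
    (h₂ : (f₂ - g₂) =O[atTop] fun r => r ^ a₂) (hg₂ : g₂ =O[atTop] fun r => r ^ b₂)
    (haa : a₁ + a₂ ≤ k) (hab : a₁ + b₂ ≤ k) (hba : b₁ + a₂ ≤ k) :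
    (f₁ * f₂ - g₁ * g₂) =O[atTop] fun r => r ^ k := by
  rw [show f₁ * f₂ - g₁ * g₂ = (f₁ - g₁) * (f₂ - g₂) + (f₁ - g₁) * g₂ + g₁ * (f₂ - g₂) by ring]
  exact (((h₁.mul_rpow_atTop h₂).trans (isBigO_rpow_rpow_atTop_of_le haa)).add
    ((h₁.mul_rpow_atTop hg₂).trans (isBigO_rpow_rpow_atTop_of_le hab))).add
    ((hg₁.mul_rpow_atTop h₂).trans (isBigO_rpow_rpow_atTop_of_le hba))

theorem tendsto_of_sub_isBigO_rpow_atTop {f g : ℝ → ℝ} {k L : ℝ} (hk : k < 0)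
    (hfg : (f - g) =O[atTop] fun r => r ^ k) (hg : Tendsto g atTop (𝓝 L)) :
    Tendsto f atTop (𝓝 L) := by
  have h0 : Tendsto (f - g) atTop (𝓝 0) :=
    hfg.trans_tendsto (by simpa using tendsto_rpow_neg_atTop (neg_pos.2 hk))
  simpa using h0.add hg

end RpowGauge

namespace Polynomial

theorem tendsto_eval_inv_atTop (p : ℝ[X]) :
    Tendsto (fun r : ℝ => p.eval r⁻¹) atTop (𝓝 (p.eval 0)) :=
  (p.continuous.tendsto 0).comp tendsto_inv_atTop_zero

theorem isBigO_eval_inv_atTop {p : ℝ[X]} {n : ℕ} {k : ℝ} (h : X ^ n ∣ p) (hk : -(n : ℝ) ≤ k) :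
    (fun r : ℝ => p.eval r⁻¹) =O[atTop] fun r => r ^ k := by
  obtain ⟨q, rfl⟩ := h
  have hX : (fun r : ℝ => (X ^ n : ℝ[X]).eval r⁻¹) =O[atTop] fun r => r ^ (-(n : ℝ)) :=
    EventuallyEq.isBigO <| by
      filter_upwards [eventually_gt_atTop 0] with r hr
      simp [Real.rpow_neg hr.le, inv_pow]
  have hq : (fun r : ℝ => q.eval r⁻¹) =O[atTop] fun r => r ^ (0 : ℝ) := by
    simpa using q.tendsto_eval_inv_atTop.isBigO_one ℝ
  have hXq := (hX.mul_rpow_atTop hq).trans (isBigO_rpow_rpow_atTop_of_le (by simpa using hk))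
  simpa [Pi.mul_def] using hXq

end Polynomial

noncomputable def jangApprox (𝒜 𝓑 D₁ D₂ s : ℝ) : ℝ :=
  √(1 + s ^ 2) + 𝒜 * Real.log s + 𝓑 + D₁ / s + D₂ / s ^ 2

noncomputable def metricExpansion (m r : ℝ) : ℝ := (1 + r ^ 2) - m / r

noncomputable def warpExpansion (C₁ C₂ C₃ r : ℝ) : ℝ := 1 + C₁ / r + C₂ / r ^ 2 + C₃ / r ^ 3

noncomputable def warpDerivExpansion (C₁ C₂ C₃ r : ℝ) : ℝ :=
  -C₁ / r ^ 2 - 2 * C₂ / r ^ 3 - 3 * C₃ / r ^ 4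

noncomputable def jangDerivExpansion (𝒜 D₁ D₂ r : ℝ) : ℝ :=
  1 + 𝒜 / r - (1 / 2 + D₁) / r ^ 2 - 2 * D₂ / r ^ 3

noncomputable def crossTermExpansion (𝒜 C₁ C₂ C₃ D₁ r : ℝ) : ℝ :=
  -2 * C₁ + (2 * C₁ ^ 2 - 4 * C₂ - 2 * 𝒜 * C₁) / r +
    (2 * C₁ * D₁ - C₁ + 6 * C₁ * C₂ - 6 * C₃ - 4 * 𝒜 * C₂ + 2 * 𝒜 * C₁ ^ 2 - 2 * C₁ ^ 3) / r ^ 2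

theorem hasDerivAt_jangApprox (𝒜 𝓑 D₁ D₂ : ℝ) {r : ℝ} (hr : r ≠ 0) :
    HasDerivAt (jangApprox 𝒜 𝓑 D₁ D₂)
      (r / √(1 + r ^ 2) + 𝒜 / r - D₁ / r ^ 2 - 2 * D₂ / r ^ 3) r := by
  have hpos : 0 < 1 + r ^ 2 := by positivity
  have hsqrt : HasDerivAt (fun s : ℝ => √(1 + s ^ 2)) (1 / (2 * √(1 + r ^ 2)) * (2 * r)) r :=
    (Real.hasDerivAt_sqrt hpos.ne').comp r (by simpa using (hasDerivAt_pow 2 r).const_add 1)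
  have hlog := (Real.hasDerivAt_log hr).const_mul 𝒜
  have hinv : HasDerivAt (fun s : ℝ => D₁ / s) (D₁ * -(r ^ 2)⁻¹) r := by
    simpa [div_eq_mul_inv] using (hasDerivAt_inv hr).const_mul D₁
  have hinv2 : HasDerivAt (fun s : ℝ => D₂ / s ^ 2) (D₂ * (-(2 * r) / (r ^ 2) ^ 2)) r := by
    simpa [div_eq_mul_inv] using ((hasDerivAt_pow 2 r).inv (pow_ne_zero 2 hr)).const_mul D₂
  refine ((((hsqrt.add hlog).add_const 𝓑).add hinv).add hinv2).congr_deriv ?_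
  have : √(1 + r ^ 2) ≠ 0 := (Real.sqrt_pos.2 hpos).ne'
  field_simp
  ring

theorem abs_div_sqrt_one_add_sq_sub_le {r : ℝ} (hr : 1 ≤ r) :
    |r / √(1 + r ^ 2) - (1 - 1 / (2 * r ^ 2))| ≤ 1 / r ^ 4 := by
  have hr0 : 0 < r := by linarith
  set s := √(1 + r ^ 2)
  have hs0 : 0 < s := Real.sqrt_pos.2 (by positivity)
  have hs2 : s ^ 2 = 1 + r ^ 2 := Real.sq_sqrt (by positivity)
  have hrs : r < s := by nlinarith
  have key : r / s - (1 - 1 / (2 * r ^ 2)) =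
      (r * s + 1 - r ^ 2) / (2 * r ^ 2 * s * (r + s)) := by
    field_simp
    linear_combination (1 - 2 * r ^ 2) * hs2
  have hnum_pos : 0 < r * s + 1 - r ^ 2 := by nlinarith
  have hnum_le : r * s + 1 - r ^ 2 ≤ 3 / 2 := by nlinarith [sq_nonneg (s - r)]
  have hden : 4 * r ^ 4 ≤ 2 * r ^ 2 * s * (r + s) := by nlinarith [sq_nonneg r]
  rw [key, abs_of_pos (by positivity), div_le_div_iff₀ (by positivity) (by positivity)]
  nlinarith [mul_le_mul_of_nonneg_right hnum_le (by positivity : (0:ℝ) ≤ r ^ 4), pow_pos hr0 4]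

theorem isBigO_deriv_jangApprox_sub (𝒜 𝓑 D₁ D₂ : ℝ) :
    (deriv (jangApprox 𝒜 𝓑 D₁ D₂) - jangDerivExpansion 𝒜 D₁ D₂) =O[atTop]
      fun r => r ^ (-4 : ℝ) :=
  isBigO_rpow_atTop_iff.2 ⟨1, 1, fun r hr => by
    have hr0 : 0 < r := by linarith
    rw [Pi.sub_apply, (hasDerivAt_jangApprox 𝒜 𝓑 D₁ D₂ hr0.ne').deriv, jangDerivExpansion,
      one_mul, Real.rpow_neg hr0.le, ← one_div]
    convert abs_div_sqrt_one_add_sq_sub_le hr using 2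
    · ring
    · norm_cast⟩

section Expansions

variable (𝒜 C₁ C₂ C₃ D₁ D₂ m : ℝ)

theorem tendsto_warpExpansion : Tendsto (warpExpansion C₁ C₂ C₃) atTop (𝓝 1) := by
  have h : (fun r => (1 + C C₁ * X + C C₂ * X ^ 2 + C C₃ * X ^ 3 : ℝ[X]).eval r⁻¹) =ᶠ[atTop]
      warpExpansion C₁ C₂ C₃ := by
    filter_upwards [eventually_ne_atTop 0] with r hr
    simp only [warpExpansion, eval_add, eval_mul, eval_pow, eval_C, eval_X, eval_one]
    field_simp
  simpa using (tendsto_eval_inv_atTop _).congr' h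

theorem isBigO_warpDerivExpansion :
    warpDerivExpansion C₁ C₂ C₃ =O[atTop] fun r => r ^ (-2 : ℝ) := by
  have h : warpDerivExpansion C₁ C₂ C₃ =ᶠ[atTop]
      fun r => (X ^ 2 * -(C C₁ + C (2 * C₂) * X + C (3 * C₃) * X ^ 2) : ℝ[X]).eval r⁻¹ := by
    filter_upwards [eventually_ne_atTop 0] with r hr
    simp only [warpDerivExpansion, eval_add, eval_mul, eval_neg, eval_pow, eval_C, eval_X]
    field_simp
    ring
  exact h.isBigO.trans (isBigO_eval_inv_atTop (dvd_mul_right _ _) (by norm_num))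

theorem isBigO_metricExpansion : metricExpansion m =O[atTop] fun r => r ^ (2 : ℝ) := by
  have h : metricExpansion m =ᶠ[atTop]
      (fun r => r ^ (2 : ℝ)) * fun r => (1 + X ^ 2 - C m * X ^ 3 : ℝ[X]).eval r⁻¹ := by
    filter_upwards [eventually_ne_atTop 0] with r hr
    simp only [metricExpansion, Pi.mul_apply, Real.rpow_two, eval_add, eval_sub, eval_mul,
      eval_pow, eval_C, eval_X, eval_one]
    field_simp
    ring
  have hO := (isBigO_refl (fun r : ℝ => r ^ (2 : ℝ)) atTop).mul_rpow_atTop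
    (isBigO_eval_inv_atTop (p := 1 + X ^ 2 - C m * X ^ 3) (n := 0) (k := 0) (by simp) (by simp))
  rw [add_zero] at hO
  exact h.isBigO.trans hO

theorem isBigO_metricExpansion_mul_warpDerivExpansion :
    (metricExpansion m * warpDerivExpansion C₁ C₂ C₃) =O[atTop] fun r => r ^ (0 : ℝ) := by
  have h : metricExpansion m * warpDerivExpansion C₁ C₂ C₃ =ᶠ[atTop] fun r =>
      (-(1 + X ^ 2 - C m * X ^ 3) * (C C₁ + C (2 * C₂) * X + C (3 * C₃) * X ^ 2) : ℝ[X]).eval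
        r⁻¹ := by
    filter_upwards [eventually_ne_atTop 0] with r hr
    simp only [metricExpansion, warpDerivExpansion, Pi.mul_apply, eval_add, eval_sub, eval_mul,
      eval_neg, eval_pow, eval_C, eval_X, eval_one]
    field_simp
    ring
  exact h.isBigO.trans (isBigO_eval_inv_atTop (n := 0) (by simp) (by simp))

theorem isBigO_jangDerivExpansion :
    jangDerivExpansion 𝒜 D₁ D₂ =O[atTop] fun r => r ^ (0 : ℝ) := by
  have h : jangDerivExpansion 𝒜 D₁ D₂ =ᶠ[atTop] fun r =>
      (1 + C 𝒜 * X - C (1 / 2 + D₁) * X ^ 2 - C (2 * D₂) * X ^ 3 : ℝ[X]).eval r⁻¹ := by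
    filter_upwards [eventually_ne_atTop 0] with r hr
    simp only [jangDerivExpansion, eval_add, eval_sub, eval_mul, eval_pow, eval_C, eval_X,
      eval_one]
    field_simp
  exact h.isBigO.trans (isBigO_eval_inv_atTop (n := 0) (by simp) (by simp))

theorem isBigO_crossTermExpansion :
    crossTermExpansion 𝒜 C₁ C₂ C₃ D₁ =O[atTop] fun r => r ^ (0 : ℝ) := by
  have h : crossTermExpansion 𝒜 C₁ C₂ C₃ D₁ =ᶠ[atTop] fun r =>
      (C (-2 * C₁) + C (2 * C₁ ^ 2 - 4 * C₂ - 2 * 𝒜 * C₁) * X +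
        C (2 * C₁ * D₁ - C₁ + 6 * C₁ * C₂ - 6 * C₃ - 4 * 𝒜 * C₂ + 2 * 𝒜 * C₁ ^ 2 - 2 * C₁ ^ 3) *
          X ^ 2 : ℝ[X]).eval r⁻¹ := by
    filter_upwards [eventually_ne_atTop 0] with r hr
    simp only [crossTermExpansion, eval_add, eval_mul, eval_pow, eval_C, eval_X]
    field_simp
  exact h.isBigO.trans (isBigO_eval_inv_atTop (n := 0) (by simp) (by simp))

theorem isBigO_crossTermExpansion_cancellation :
    (fun r => 2 * metricExpansion m r * warpDerivExpansion C₁ C₂ C₃ r *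
        jangDerivExpansion 𝒜 D₁ D₂ r - warpExpansion C₁ C₂ C₃ r * crossTermExpansion 𝒜 C₁ C₂ C₃ D₁ r)
      =O[atTop] fun r => r ^ (-3 : ℝ) := by
  have h : (fun r => 2 * metricExpansion m r * warpDerivExpansion C₁ C₂ C₃ r *
        jangDerivExpansion 𝒜 D₁ D₂ r - warpExpansion C₁ C₂ C₃ r * crossTermExpansion 𝒜 C₁ C₂ C₃ D₁ r)
      =ᶠ[atTop] fun r => (-2 * (1 + X ^ 2 - C m * X ^ 3) *
          (C C₁ + C (2 * C₂) * X + C (3 * C₃) * X ^ 2) *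
          (1 + C 𝒜 * X - C (1 / 2 + D₁) * X ^ 2 - C (2 * D₂) * X ^ 3) -
        (1 + C C₁ * X + C C₂ * X ^ 2 + C C₃ * X ^ 3) *
          (C (-2 * C₁) + C (2 * C₁ ^ 2 - 4 * C₂ - 2 * 𝒜 * C₁) * X +
            C (2 * C₁ * D₁ - C₁ + 6 * C₁ * C₂ - 6 * C₃ - 4 * 𝒜 * C₂ +
              2 * 𝒜 * C₁ ^ 2 - 2 * C₁ ^ 3) * X ^ 2) : ℝ[X]).eval r⁻¹ := by
    filter_upwards [eventually_ne_atTop 0] with r hr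
    simp only [metricExpansion, warpDerivExpansion, jangDerivExpansion, warpExpansion,
      crossTermExpansion, eval_add, eval_sub, eval_mul, eval_neg, eval_pow, eval_C, eval_X,
      eval_one, eval_ofNat]
    field_simp
    ring
  refine h.isBigO.trans (isBigO_eval_inv_atTop (n := 3) ?_ (by norm_num))
  -- The coefficients of `crossTermExpansion` are exactly those making these three vanish.
  rw [X_pow_dvd_iff]
  intro d hd
  interval_cases d <;>
    simp [coeff_mul, Finset.Nat.antidiagonal_succ, coeff_X, coeff_C, coeff_one, coeff_X_pow,
      -map_pow, -map_mul, -map_sub, -map_add, -map_neg] <;> ring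

end Expansions

theorem stmt_10_general (𝒜 𝓑 C₁ C₂ C₃ D₁ D₂ mR : ℝ)
    (u u' G : ℝ → ℝ)
    (hu : ∃ C R, ∀ r ≥ R,
      |u r - (1 + C₁ / r + C₂ / r ^ 2 + C₃ / r ^ 3)| ≤ C * r ^ (-4 : ℝ))
    (hu' : ∃ C R, ∀ r ≥ R,
      |u' r - (-C₁ / r ^ 2 - 2 * C₂ / r ^ 3 - 3 * C₃ / r ^ 4)| ≤ C * r ^ (-5 : ℝ))
    (hG : ∃ C R, ∀ r ≥ R, |G r - ((1 + r ^ 2) - mR / r)| ≤ C * r ^ (-2 : ℝ)) :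
    ∃ C R, ∀ r ≥ R,
      |2 * G r * u' r *
          (deriv (fun s => Real.sqrt (1 + s ^ 2) + 𝒜 * Real.log s + 𝓑 +
            D₁ / s + D₂ / s ^ 2) r) / u r -
        (-2 * C₁ + (2 * C₁ ^ 2 - 4 * C₂ - 2 * 𝒜 * C₁) / r +
          (2 * C₁ * D₁ - C₁ + 6 * C₁ * C₂ - 6 * C₃ - 4 * 𝒜 * C₂ +
            2 * 𝒜 * C₁ ^ 2 - 2 * C₁ ^ 3) / r ^ 2)| ≤ C * r ^ (-3 : ℝ) := by
  have hu : (u - warpExpansion C₁ C₂ C₃) =O[atTop] fun r => r ^ (-4 : ℝ) :=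
    isBigO_rpow_atTop_iff.2 hu
  have hu' : (u' - warpDerivExpansion C₁ C₂ C₃) =O[atTop] fun r => r ^ (-5 : ℝ) :=
    isBigO_rpow_atTop_iff.2 hu'
  have hG : (G - metricExpansion mR) =O[atTop] fun r => r ^ (-2 : ℝ) :=
    isBigO_rpow_atTop_iff.2 hG
  have hGu' := isBigO_mul_sub_mul_rpow_atTop (k := -3) hG (isBigO_metricExpansion mR) hu'
    (isBigO_warpDerivExpansion C₁ C₂ C₃) (by norm_num) (by norm_num) (by norm_num)
  have hGu'F := isBigO_mul_sub_mul_rpow_atTop (k := -3) hGu'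
    (isBigO_metricExpansion_mul_warpDerivExpansion C₁ C₂ C₃ mR)
    (isBigO_deriv_jangApprox_sub 𝒜 𝓑 D₁ D₂) (isBigO_jangDerivExpansion 𝒜 D₁ D₂)
    (by norm_num) (by norm_num) (by norm_num)
  have huT := (hu.mul_rpow_atTop (isBigO_crossTermExpansion 𝒜 C₁ C₂ C₃ D₁)).trans
    (isBigO_rpow_rpow_atTop_of_le (by norm_num : (-4 : ℝ) + 0 ≤ -3))
  have hΔ := ((hGu'F.const_mul_left 2).sub huT).add
    (isBigO_crossTermExpansion_cancellation 𝒜 C₁ C₂ C₃ D₁ D₂ mR)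
  have hu1 : Tendsto u atTop (𝓝 1) :=
    tendsto_of_sub_isBigO_rpow_atTop (by norm_num) hu (tendsto_warpExpansion C₁ C₂ C₃)
  refine (isBigO_rpow_atTop_iff (f := fun r => 2 * G r * u' r * deriv (jangApprox 𝒜 𝓑 D₁ D₂) r /
    u r - crossTermExpansion 𝒜 C₁ C₂ C₃ D₁ r)).1 ?_
  refine (hΔ.mul ((hu1.inv₀ one_ne_zero).isBigO_one ℝ)).congr' ?_ (by simp)
  filter_upwards [hu1.eventually_ne one_ne_zero] with r hr
  simp only [Pi.mul_apply, Pi.sub_apply]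
  field_simp
  ring

/-- Expansion (018-2): the radial part of 2⟨∇u/u, ∇f₀⟩_g equals
−2C₁ + (2C₁² − 4C₂ − 2𝒜C₁)/r
+ (2C₁D₁ − C₁ + 6C₁C₂ − 6C₃ − 4𝒜C₂ + 2𝒜C₁² − 2C₁³)/r² + O(r^{−3}),
for f₀ = √(1+r²) + 𝒜 log r + 𝓑 + D₁/r + D₂/r². -/
theorem stmt_10 (𝒜 𝓑 C₁ C₂ C₃ D₁ D₂ mR r₀ : ℝ) (hr₀ : 0 < r₀)
    (u u' G : ℝ → ℝ) (hupos : ∀ r ≥ r₀, 0 < u r)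
    (hud : ∀ r ≥ r₀, HasDerivAt u (u' r) r)
    (hu : ∃ C R, ∀ r ≥ R,
      |u r - (1 + C₁ / r + C₂ / r ^ 2 + C₃ / r ^ 3)| ≤ C * r ^ (-4 : ℝ))
    (hu' : ∃ C R, ∀ r ≥ R,
      |u' r - (-C₁ / r ^ 2 - 2 * C₂ / r ^ 3 - 3 * C₃ / r ^ 4)| ≤ C * r ^ (-5 : ℝ))
    (hG : ∃ C R, ∀ r ≥ R, |G r - ((1 + r ^ 2) - mR / r)| ≤ C * r ^ (-2 : ℝ)) :
    ∃ C R, ∀ r ≥ R,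
      |2 * G r * u' r *
          (deriv (fun s => Real.sqrt (1 + s ^ 2) + 𝒜 * Real.log s + 𝓑 +
            D₁ / s + D₂ / s ^ 2) r) / u r -
        (-2 * C₁ + (2 * C₁ ^ 2 - 4 * C₂ - 2 * 𝒜 * C₁) / r +
          (2 * C₁ * D₁ - C₁ + 6 * C₁ * C₂ - 6 * C₃ - 4 * 𝒜 * C₂ +
            2 * 𝒜 * C₁ ^ 2 - 2 * C₁ ^ 3) / r ^ 2)| ≤ C * r ^ (-3 : ℝ) :=
  stmt_10_general 𝒜 𝓑 C₁ C₂ C₃ D₁ D₂ mR u u' G hu hu' hG
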